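/- arXiv:1606.01082 — 2 statements merged into one kernel-verified Lean document; each statement's English description precedes it below -/
import Mathlib

section
/- If b ≠ 0, then the derived subalgebra [L_0, L_0] equals ℂH_0 ⊕ L_1, where L_n = span{L_i, H_i : i ≥ n}. -/
/-- The span of brackets [A, B] of two subspaces of a Lie algebra. -/
def bracketSpan {g : Type*} [LieRing g] [LieAlgebra ℂ g]
    (A B : Submodule ℂ g) : Submodule ℂ g :=
  Submodule.span ℂ {z | ∃ x ∈ A, ∃ y ∈ B, z = ⁅x, y⁆}

/-- The filtration subspace L_n = span{L_i, H_i : i ≥ n}. -/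
def filtSub (g : Type*) [AddCommGroup g] [Module ℂ g] (L H : ℤ → g) (n : ℤ) :
    Submodule ℂ g :=
  Submodule.span ℂ
    ({x | ∃ i : ℤ, n ≤ i ∧ -1 ≤ i ∧ x = L i} ∪ {x | ∃ i : ℤ, n ≤ i ∧ 0 ≤ i ∧ x = H i})

/-!
The bracket of two generators of `L_0` of indices `m, n ≥ 0` is a multiple of a generator of
index `m + n`, and in total index `0` only `[L_0, L_0] = 0` and `[L_0, H_0] = -b H_0` occur;
hence `[L_0, L_0] ⊆ ℂH_0 + L_1`. Conversely, for `i ≥ 1` the brackets `[L_0, L_i] = -i L_i`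
and `[L_i, H_0] = -b(i+1) H_i` have nonzero coefficients, as does `[L_0, H_0]` since `b ≠ 0`.
The sum is direct because the `L_i, H_j` are linearly independent.
-/
open Submodule

section Bracket

variable {g : Type*} [LieRing g] [LieAlgebra ℂ g]

theorem lie_mem_bracketSpan {A B : Submodule ℂ g} {x y : g} (hx : x ∈ A) (hy : y ∈ B) :
    ⁅x, y⁆ ∈ bracketSpan A B :=
  subset_span ⟨x, hx, y, hy, rfl⟩

theorem bracketSpan_span_span (S T : Set g) :
    bracketSpan (span ℂ S) (span ℂ T) = span ℂ (Set.image2 Bracket.bracket S T) := by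
  have h := map₂_span_span ℂ
    (LinearMap.mk₂ ℂ (⁅·, ·⁆ : g → g → g) add_lie smul_lie lie_add lie_smul) S T
  rw [map₂_eq_span_image2] at h
  simp only [LinearMap.mk₂_apply] at h
  have hset : {z | ∃ x ∈ span ℂ S, ∃ y ∈ span ℂ T, z = ⁅x, y⁆} =
      Set.image2 (fun x y => ⁅x, y⁆) (span ℂ S : Set g) (span ℂ T) := by
    ext z
    simp [Set.mem_image2, eq_comm]
  rw [bracketSpan, hset, h]

end Bracket

section Filtration

variable {g : Type*} [AddCommGroup g] [Module ℂ g] (L H : ℤ → g)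

theorem L_mem_filtSub {n i : ℤ} (hni : n ≤ i) (hi : -1 ≤ i) : L i ∈ filtSub g L H n :=
  subset_span (Or.inl ⟨i, hni, hi, rfl⟩)

theorem H_mem_filtSub {n i : ℤ} (hni : n ≤ i) (hi : 0 ≤ i) : H i ∈ filtSub g L H n :=
  subset_span (Or.inr ⟨i, hni, hi, rfl⟩)

theorem filtSub_le_iff {n : ℤ} {M : Submodule ℂ g} :
    filtSub g L H n ≤ M ↔
      (∀ i, n ≤ i → -1 ≤ i → L i ∈ M) ∧ (∀ i, n ≤ i → 0 ≤ i → H i ∈ M) := by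
  simp only [filtSub, span_le, Set.union_subset_iff, Set.ofPred_subset]
  constructor
  · rintro ⟨hL, hH⟩
    exact ⟨fun i h₁ h₂ => hL _ ⟨i, h₁, h₂, rfl⟩, fun i h₁ h₂ => hH _ ⟨i, h₁, h₂, rfl⟩⟩
  · rintro ⟨hL, hH⟩
    exact ⟨fun _ ⟨i, h₁, h₂, hx⟩ => hx ▸ hL i h₁ h₂, fun _ ⟨i, h₁, h₂, hx⟩ => hx ▸ hH i h₁ h₂⟩

theorem disjoint_span_H_zero_filtSub_one
    (hind : LinearIndependent ℂ
      (fun p : {i : ℤ // -1 ≤ i} ⊕ {j : ℤ // 0 ≤ j} =>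
        Sum.elim (fun i => L i.1) (fun j => H j.1) p)) :
    Disjoint (span ℂ {H 0}) (filtSub g L H 1) := by
  let a : {i : ℤ // -1 ≤ i} ⊕ {j : ℤ // 0 ≤ j} := Sum.inr ⟨0, le_rfl⟩
  refine (hind.disjoint_span_image (s := {a}) disjoint_compl_right).mono
    (by rw [Set.image_singleton]; rfl) ((filtSub_le_iff L H).mpr ⟨?_, ?_⟩)
  · exact fun i _ hi => subset_span ⟨Sum.inl ⟨i, hi⟩, by simp [a], rfl⟩
  · refine fun i h₁ hi => subset_span ⟨Sum.inr ⟨i, hi⟩, ?_, rfl⟩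
    simp only [a, Set.mem_compl_iff, Set.mem_singleton_iff, Sum.inr.injEq, Subtype.mk.injEq]
    omega

end Filtration

section Derived

variable {g : Type*} [LieRing g] [LieAlgebra ℂ g] {b : ℂ} {L H : ℤ → g}

theorem bracketSpan_filtSub_zero_le
    (hLL : ∀ m n : ℤ, -1 ≤ m → -1 ≤ n → ⁅L m, L n⁆ = ((m - n : ℤ) : ℂ) • L (m + n))
    (hLH : ∀ m n : ℤ, -1 ≤ m → 0 ≤ n →
      ⁅L m, H n⁆ = (-(b * (m : ℂ) + (n : ℂ) + b)) • H (m + n))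
    (hHH : ∀ m n : ℤ, 0 ≤ m → 0 ≤ n → ⁅H m, H n⁆ = 0) :
    bracketSpan (filtSub g L H 0) (filtSub g L H 0) ≤ span ℂ {H 0} ⊔ filtSub g L H 1 := by
  set M := span ℂ {H 0} ⊔ filtSub g L H 1
  have hLL_mem : ∀ m n : ℤ, 0 ≤ m → 0 ≤ n → ⁅L m, L n⁆ ∈ M := by
    intro m n hm hn
    rw [hLL m n (by omega) (by omega)]
    rcases (by omega : m = 0 ∧ n = 0 ∨ 1 ≤ m + n) with ⟨rfl, rfl⟩ | h
    · simp
    · exact smul_mem _ _ (mem_sup_right (L_mem_filtSub L H h (by omega)))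
  have hLH_mem : ∀ m n : ℤ, 0 ≤ m → 0 ≤ n → ⁅L m, H n⁆ ∈ M := by
    intro m n hm hn
    rw [hLH m n (by omega) hn]
    rcases (by omega : m = 0 ∧ n = 0 ∨ 1 ≤ m + n) with ⟨rfl, rfl⟩ | h
    · exact smul_mem _ _ (mem_sup_left (mem_span_singleton_self _))
    · exact smul_mem _ _ (mem_sup_right (H_mem_filtSub L H h (by omega)))
  rw [filtSub, bracketSpan_span_span, span_le]
  rintro _ ⟨_, ⟨m, hm, -, rfl⟩ | ⟨m, hm, -, rfl⟩, _, ⟨n, hn, -, rfl⟩ | ⟨n, hn, -, rfl⟩, rfl⟩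
  · exact hLL_mem m n hm hn
  · exact hLH_mem m n hm hn
  · rw [← lie_skew]
    exact neg_mem (hLH_mem n m hn hm)
  · rw [hHH m n hm hn]
    exact zero_mem _

theorem span_H_zero_sup_filtSub_one_le (hb : b ≠ 0)
    (hLL : ∀ m n : ℤ, -1 ≤ m → -1 ≤ n → ⁅L m, L n⁆ = ((m - n : ℤ) : ℂ) • L (m + n))
    (hLH : ∀ m n : ℤ, -1 ≤ m → 0 ≤ n →
      ⁅L m, H n⁆ = (-(b * (m : ℂ) + (n : ℂ) + b)) • H (m + n)) :
    span ℂ {H 0} ⊔ filtSub g L H 1 ≤ bracketSpan (filtSub g L H 0) (filtSub g L H 0) := by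
  have hL0 : L 0 ∈ filtSub g L H 0 := L_mem_filtSub L H le_rfl (by norm_num)
  have hH0 : H 0 ∈ filtSub g L H 0 := H_mem_filtSub L H le_rfl le_rfl
  have hH0_mem : H 0 ∈ bracketSpan (filtSub g L H 0) (filtSub g L H 0) := by
    have h := lie_mem_bracketSpan hL0 hH0
    have hcoeff : -(b * ((0 : ℤ) : ℂ) + ((0 : ℤ) : ℂ) + b) = -b := by push_cast; ring
    rw [hLH 0 0 (by norm_num) le_rfl, hcoeff, smul_mem_iff _ (neg_ne_zero.mpr hb)] at h
    exact h
  refine sup_le ((span_singleton_le_iff_mem _ _).mpr hH0_mem)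
    ((filtSub_le_iff L H).mpr ⟨fun i hi _ => ?_, fun i hi _ => ?_⟩)
  · have h := lie_mem_bracketSpan hL0 (L_mem_filtSub L H (n := 0) (i := i) (by omega) (by omega))
    rw [hLL 0 i (by norm_num) (by omega), zero_add,
      smul_mem_iff _ (Int.cast_ne_zero.mpr (by omega))] at h
    exact h
  · have h := lie_mem_bracketSpan (L_mem_filtSub L H (n := 0) (i := i) (by omega) (by omega)) hH0
    have hcoeff : -(b * (i : ℂ) + ((0 : ℤ) : ℂ) + b) = -b * ((i + 1 : ℤ) : ℂ) := by
      push_cast; ring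
    have hi1 : ((i + 1 : ℤ) : ℂ) ≠ 0 := Int.cast_ne_zero.mpr (by omega)
    rw [hLH i 0 (by omega) le_rfl, add_zero, hcoeff,
      smul_mem_iff _ (mul_ne_zero (neg_ne_zero.mpr hb) hi1)] at h
    exact h

end Derived

theorem derived_L0_b_ne_zero_general
    (g : Type*) [LieRing g] [LieAlgebra ℂ g] (b : ℂ) (hb : b ≠ 0) (L H : ℤ → g)
    (hLL : ∀ m n : ℤ, -1 ≤ m → -1 ≤ n →
      ⁅L m, L n⁆ = ((m - n : ℤ) : ℂ) • L (m + n))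
    (hLH : ∀ m n : ℤ, -1 ≤ m → 0 ≤ n →
      ⁅L m, H n⁆ = (-(b * (m : ℂ) + (n : ℂ) + b)) • H (m + n))
    (hHH : ∀ m n : ℤ, 0 ≤ m → 0 ≤ n → ⁅H m, H n⁆ = 0)
    (hind : LinearIndependent ℂ
      (fun p : {i : ℤ // -1 ≤ i} ⊕ {j : ℤ // 0 ≤ j} =>
        Sum.elim (fun i => L i.1) (fun j => H j.1) p)) :
    bracketSpan (filtSub g L H 0) (filtSub g L H 0)
        = Submodule.span ℂ {H 0} ⊔ filtSub g L H 1 ∧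
    Submodule.span ℂ {H 0} ⊓ filtSub g L H 1 = ⊥ :=
  ⟨le_antisymm (bracketSpan_filtSub_zero_le hLL hLH hHH)
      (span_H_zero_sup_filtSub_one_le hb hLL hLH),
    disjoint_iff.mp (disjoint_span_H_zero_filtSub_one L H hind)⟩

theorem derived_L0_b_ne_zero
    (g : Type*) [LieRing g] [LieAlgebra ℂ g] (b : ℂ) (hb : b ≠ 0) (L H : ℤ → g)
    (hH0 : ∀ n : ℤ, n < 0 → H n = 0)
    (hLL : ∀ m n : ℤ, -1 ≤ m → -1 ≤ n →
      ⁅L m, L n⁆ = ((m - n : ℤ) : ℂ) • L (m + n))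
    (hLH : ∀ m n : ℤ, -1 ≤ m → 0 ≤ n →
      ⁅L m, H n⁆ = (-(b * (m : ℂ) + (n : ℂ) + b)) • H (m + n))
    (hHH : ∀ m n : ℤ, 0 ≤ m → 0 ≤ n → ⁅H m, H n⁆ = 0)
    (hind : LinearIndependent ℂ
      (fun p : {i : ℤ // -1 ≤ i} ⊕ {j : ℤ // 0 ≤ j} =>
        Sum.elim (fun i => L i.1) (fun j => H j.1) p)) :
    bracketSpan (filtSub g L H 0) (filtSub g L H 0)
        = Submodule.span ℂ {H 0} ⊔ filtSub g L H 1 ∧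
    Submodule.span ℂ {H 0} ⊓ filtSub g L H 1 = ⊥ :=
  derived_L0_b_ne_zero_general g b hb L H hLL hLH hHH hind
end

section
/- Every nontrivial free rank-one conformal module over the Schrödinger-Virasoro conformal algebra on which the module structure is given by L_λ v = (∂+α+Δλ)v, M_λ v = Y_λ v = 0 is irreducible if and only if Δ ≠ 0. -/
open Polynomial

/- The rank-one conformal module M_{Δ,α} = ℂ[∂]v over the Schrödinger-Virasoro
conformal algebra, identified with ℂ[X] (X = ∂); with λ the outer variable of
ℂ[∂][λ], the λ-actions are L_λ(f(∂)v) = (∂ + α + Δλ) f(∂+λ) v and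
M_λ(f(∂)v) = Y_λ(f(∂)v) = 0. -/

/-- Substitution f(∂) ↦ f(∂+λ) in ℂ[∂][λ]. -/
noncomputable def shP (f : Polynomial ℂ) : Polynomial (Polynomial ℂ) :=
  Polynomial.aeval (Polynomial.C Polynomial.X + Polynomial.X) f

/-- λ-action of L on M_{Δ,α}: L_λ(f(∂)v) = (∂ + α + Δλ) f(∂+λ) v. -/
noncomputable def LA (Δ α : ℂ) (f : Polynomial ℂ) : Polynomial (Polynomial ℂ) :=
  (Polynomial.C (Polynomial.X + Polynomial.C α)
    + Polynomial.C (Polynomial.C Δ) * Polynomial.X) * shP f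

/-- λ-actions of M and Y on M_{Δ,α} are zero. -/
noncomputable def MA (f : Polynomial ℂ) : Polynomial (Polynomial ℂ) := 0
noncomputable def YA (f : Polynomial ℂ) : Polynomial (Polynomial ℂ) := 0

/- Substituting ∂ ↦ ∂ + λ preserves degree and leading coefficient, so when Δ ≠ 0 the top
λ-coefficient of L_λ f is the nonzero constant Δ · lc(f), a unit that generates everything.
When Δ = 0, L_λ f = (∂ + α) f(∂ + λ), so (∂ + α)ℂ[∂] is a proper nonzero submodule. -/

lemma shP_eq_comp (f : ℂ[X]) : shP f = (f.map C).comp (X + C X) := by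
  rw [shP, comp, eval₂_map, aeval_def, add_comm]
  rfl

lemma leadingCoeff_shP (f : ℂ[X]) : (shP f).leadingCoeff = C f.leadingCoeff := by
  rw [shP_eq_comp, leadingCoeff_comp (by rw [natDegree_X_add_C]; exact one_ne_zero),
    leadingCoeff_X_add_C, one_pow, mul_one, leadingCoeff_map_of_injective C_injective]

lemma leadingCoeff_LA {Δ : ℂ} (hΔ : Δ ≠ 0) (α : ℂ) (f : ℂ[X]) :
    (LA Δ α f).leadingCoeff = C (Δ * f.leadingCoeff) := by
  have hfactor : (C (X + C α) + C (C Δ) * X : ℂ[X][X]) = C (C Δ) * X + C (X + C α) :=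
    add_comm _ _
  rw [LA, leadingCoeff_mul, hfactor, leadingCoeff_linear (C_ne_zero.mpr hΔ), leadingCoeff_shP,
    C_mul]

lemma LA_zero (α : ℂ) (f : ℂ[X]) : LA 0 α f = C (X + C α) * shP f := by
  rw [LA, C_0, C_0, zero_mul, add_zero]

lemma coeff_LA_zero_mem_span (α : ℂ) (f : ℂ[X]) (j : ℕ) :
    (LA 0 α f).coeff j ∈ Ideal.span {X + C α} := by
  rw [LA_zero, coeff_C_mul]
  exact Ideal.mul_mem_right _ _ (Ideal.mem_span_singleton_self _)

lemma eq_bot_or_eq_top_of_coeff_LA_mem {Δ : ℂ} (hΔ : Δ ≠ 0) (α : ℂ) (W : Ideal ℂ[X])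
    (hW : ∀ f ∈ W, ∀ j : ℕ, (LA Δ α f).coeff j ∈ W) : W = ⊥ ∨ W = ⊤ := by
  refine or_iff_not_imp_left.mpr fun hW_ne_bot => ?_
  obtain ⟨f, hfW, hf⟩ := Submodule.exists_mem_ne_zero_of_ne_bot hW_ne_bot
  have hlc_mem : C (Δ * f.leadingCoeff) ∈ W := by
    rw [← leadingCoeff_LA hΔ α f]
    exact hW f hfW _
  exact Ideal.eq_top_of_isUnit_mem W hlc_mem
    (isUnit_C.mpr (mul_ne_zero hΔ (leadingCoeff_ne_zero.mpr hf)).isUnit)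

lemma span_X_add_C_ne_bot (α : ℂ) : Ideal.span {X + C α} ≠ (⊥ : Ideal ℂ[X]) := by
  rw [Ne, Ideal.span_singleton_eq_bot]
  exact X_add_C_ne_zero α

lemma span_X_add_C_ne_top (α : ℂ) : Ideal.span {X + C α} ≠ (⊤ : Ideal ℂ[X]) := by
  rw [Ne, Ideal.span_singleton_eq_top]
  exact not_isUnit_X_add_C α

theorem SV_M_Delta_alpha_irreducible_iff (Δ α : ℂ) :
    (∀ W : Submodule (Polynomial ℂ) (Polynomial ℂ),
      (∀ f ∈ W, ∀ j : ℕ,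
        (LA Δ α f).coeff j ∈ W ∧ (MA f).coeff j ∈ W ∧ (YA f).coeff j ∈ W) →
      W = ⊥ ∨ W = ⊤) ↔ Δ ≠ 0 := by
  constructor
  · rintro hirred rfl
    rcases hirred (Ideal.span {X + C α})
        (fun f _ j => ⟨coeff_LA_zero_mem_span α f j, by simp [MA], by simp [YA]⟩) with h | h
    · exact span_X_add_C_ne_bot α h
    · exact span_X_add_C_ne_top α h
  · exact fun hΔ W hW => eq_bot_or_eq_top_of_coeff_LA_mem hΔ α W fun f hf j => (hW f hf j).1
end
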